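/- arXiv:2307.04304 — 5 statements merged into one kernel-verified Lean document; each statement's English description precedes it below -/
import Mathlib

section
/- Theorem 1(i) (Identification, loss-minimization part): under the stated assumptions, the randomized-experiment least-squares parameter β* also minimizes the combined-population squared loss for the augmented ANCOVA model: for every β ∈ ℝ^{k₁+2}, E_P[(Y − μ̄_aug(·;β))²] ≥ E_P[(Y − μ̄_aug(·;β*))²]. -/
open MeasureTheory ProbabilityTheory
open scoped ENNReal

/-!
The combined loss is `P(S=1)` times the loss under `P(·|S=1)` plus `P(S=0)` times the loss under
`P(·|S=0)`, and `β*` minimizes each part. On the trial the augmentation `(1 − S) b₀` vanishes, so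
the first part is the trial loss that `β*` minimizes by definition. On the external controls
`A = 0`, and the definition of `b₀` makes the augmented model at `β` equal to `E[Y | σ(X)]` plus a
`σ(X)`-measurable function that vanishes at `β*`; as the conditional expectation is the best
`σ(X)`-measurable predictor in mean square, `β*` minimizes the second part too.
-/

namespace MeasureTheory

variable {Ω : Type*} {m m₀ : MeasurableSpace Ω} {μ : Measure Ω}

noncomputable def sqLoss (μ : Measure Ω) (Y f : Ω → ℝ) : ℝ := ∫ ω, (Y ω - f ω) ^ 2 ∂μ

theorem sqLoss_congr_ae {Y f g : Ω → ℝ} (h : f =ᵐ[μ] g) : sqLoss μ Y f = sqLoss μ Y g :=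
  integral_congr_ae (h.mono fun ω hω => by simp only [hω])

theorem integral_mul_sub_condExp_eq_zero [IsFiniteMeasure μ] (hm : m ≤ m₀) {Y g : Ω → ℝ}
    (hY : MemLp Y 2 μ) (hg : MemLp g 2 μ) (hgm : StronglyMeasurable[m] g) :
    ∫ ω, g ω * (Y ω - μ[Y|m] ω) ∂μ = 0 := by
  have hgY : Integrable (fun ω => g ω * Y ω) μ := hg.integrable_mul hY
  have hgE : Integrable (fun ω => g ω * μ[Y|m] ω) μ := hg.integrable_mul (hY.condExp one_le_two)
  simp_rw [mul_sub]
  rw [integral_sub hgY hgE, sub_eq_zero, ← integral_condExp hm]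
  exact integral_congr_ae
    (condExp_mul_of_stronglyMeasurable_left hgm hgY (hY.integrable one_le_two))

theorem sqLoss_condExp_le [IsFiniteMeasure μ] (hm : m ≤ m₀) {Y h : Ω → ℝ}
    (hY : MemLp Y 2 μ) (hh : MemLp h 2 μ) (hhm : StronglyMeasurable[m] h) :
    sqLoss μ Y μ[Y|m] ≤ sqLoss μ Y h := by
  set g := μ[Y|m] - h
  set e := Y - μ[Y|m]
  have hg : MemLp g 2 μ := (hY.condExp one_le_two).sub hh
  have he : MemLp e 2 μ := hY.sub (hY.condExp one_le_two)
  have hcross : ∫ ω, g ω * e ω ∂μ = 0 :=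
    integral_mul_sub_condExp_eq_zero hm hY hg (stronglyMeasurable_condExp.sub hhm)
  have hge : Integrable (fun ω => 2 * (g ω * e ω)) μ := (hg.integrable_mul he).const_mul 2
  have hpyth : sqLoss μ Y h = sqLoss μ Y μ[Y|m] + ∫ ω, g ω ^ 2 ∂μ := by
    calc sqLoss μ Y h = ∫ ω, e ω ^ 2 + 2 * (g ω * e ω) + g ω ^ 2 ∂μ := by
          unfold sqLoss; congr 1; ext ω; simp only [g, e, Pi.sub_apply]; ring
    _ = sqLoss μ Y μ[Y|m] + ∫ ω, g ω ^ 2 ∂μ := by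
          have he2 : Integrable (fun ω => e ω ^ 2) μ := he.integrable_sq
          rw [integral_add (f := fun ω => e ω ^ 2 + 2 * (g ω * e ω)) (he2.add hge) hg.integrable_sq,
            integral_add he2 hge, integral_const_mul, hcross, mul_zero, add_zero]
          rfl
  rw [hpyth]
  exact le_add_of_nonneg_right (integral_nonneg fun ω => sq_nonneg _)

end MeasureTheory

namespace ProbabilityTheory

variable {Ω E : Type*} {m₀ : MeasurableSpace Ω} {μ : Measure Ω} {s : Set Ω}

theorem restrict_eq_smul_cond (hs : μ s ≠ ∞) : μ.restrict s = μ s • μ[|s] := by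
  rcases eq_or_ne (μ s) 0 with h | h
  · simp [h]
  · rw [cond, smul_smul, ENNReal.mul_inv_cancel h hs, one_smul]

theorem setIntegral_eq_measureReal_mul_integral_cond [NormedAddCommGroup E] [NormedSpace ℝ E]
    (hs : μ s ≠ ∞) (f : Ω → E) : ∫ x in s, f x ∂μ = μ.real s • ∫ x, f x ∂μ[|s] := by
  rw [restrict_eq_smul_cond hs, integral_smul_measure, measureReal_def]

theorem _root_.MeasureTheory.MemLp.cond [NormedAddCommGroup E] {p : ℝ≥0∞} {f : Ω → E}
    (hf : MemLp f p μ) : MemLp f p μ[|s] := by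
  rcases eq_or_ne (μ s) 0 with h | h
  · simp [cond_eq_zero_of_meas_eq_zero h]
  · exact (hf.restrict s).smul_measure (ENNReal.inv_ne_top.2 h)

theorem memLp_indicator_of_cond [NormedAddCommGroup E] {p : ℝ≥0∞} {f : Ω → E}
    (hs : MeasurableSet s) (hμs : μ s ≠ ∞) (hf : MemLp f p μ[|s]) : MemLp (s.indicator f) p μ := by
  rw [memLp_indicator_iff_restrict hs, restrict_eq_smul_cond hμs]
  exact hf.smul_measure hμs

theorem integral_le_integral_of_cond_le_of_cond_compl_le [IsFiniteMeasure μ] {f g : Ω → ℝ}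
    (hs : MeasurableSet s) (hf : Integrable f μ) (hg : Integrable g μ)
    (h₁ : ∫ x, f x ∂μ[|s] ≤ ∫ x, g x ∂μ[|s]) (h₂ : ∫ x, f x ∂μ[|sᶜ] ≤ ∫ x, g x ∂μ[|sᶜ]) :
    ∫ x, f x ∂μ ≤ ∫ x, g x ∂μ := by
  rw [← integral_add_compl hs hf, ← integral_add_compl hs hg]
  simp only [setIntegral_eq_measureReal_mul_integral_cond (measure_ne_top μ _), smul_eq_mul]
  gcongr

end ProbabilityTheory

section Ancova

variable {Ω : Type*} {m₀ : MeasurableSpace Ω} {μ : Measure Ω} {k : ℕ}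

def ancovaModel (A : Ω → ℝ) (V : Ω → Fin k → ℝ) (β : ℝ × ℝ × (Fin k → ℝ)) (ω : Ω) : ℝ :=
  β.1 + β.2.1 * A ω + ∑ i, β.2.2 i * V ω i

def augmentedAncovaModel (A S b : Ω → ℝ) (V : Ω → Fin k → ℝ) (β : ℝ × ℝ × (Fin k → ℝ))
    (ω : Ω) : ℝ :=
  ancovaModel A V β ω + (1 - S ω) * b ω

theorem memLp_ancovaModel [IsFiniteMeasure μ] {p : ℝ≥0∞} {A : Ω → ℝ} {V : Ω → Fin k → ℝ}
    (hA : MemLp A p μ) (hV : ∀ i, MemLp (V · i) p μ) (β : ℝ × ℝ × (Fin k → ℝ)) :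
    MemLp (ancovaModel A V β) p μ :=
  ((memLp_const β.1).add (hA.const_mul β.2.1)).add
    (memLp_finsetSum Finset.univ fun i _ => (hV i).const_mul (β.2.2 i))

theorem memLp_augmentedAncovaModel [IsFiniteMeasure μ] {A S b : Ω → ℝ} {V : Ω → Fin k → ℝ}
    (hA : MemLp A 2 μ) (hV : ∀ i, MemLp (V · i) 2 μ) (hS : Measurable S)
    (hS01 : ∀ ω, S ω = 0 ∨ S ω = 1) (hb : MemLp b 2 (μ[|{ω | S ω = 0}]))
    (β : ℝ × ℝ × (Fin k → ℝ)) :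
    MemLp (augmentedAncovaModel A S b V β) 2 μ := by
  have hbias : MemLp (fun ω => (1 - S ω) * b ω) 2 μ := by
    refine (memLp_indicator_of_cond (hS (measurableSet_singleton 0)) (measure_ne_top _ _)
      hb).ae_eq (ae_of_all _ fun ω => ?_)
    rcases hS01 ω with h | h <;> simp [h]
  exact (memLp_ancovaModel hA hV β).add hbias

theorem sqLoss_augmentedAncovaModel_of_trial {A S b Y : Ω → ℝ} {V : Ω → Fin k → ℝ}
    (hS : ∀ᵐ ω ∂μ, S ω = 1) (β : ℝ × ℝ × (Fin k → ℝ)) :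
    sqLoss μ Y (augmentedAncovaModel A S b V β) = sqLoss μ Y (ancovaModel A V β) :=
  sqLoss_congr_ae (hS.mono fun ω hω => by simp [augmentedAncovaModel, hω])

/-- Where `A = 0`, the bias `b = E[Y | m] − (β₀_int + β₀_X ⬝ V)` turns the augmented model at `β`
into `E[Y | m]` plus the `m`-measurable shift `ancovaModel 0 V (β - β₀)`, which vanishes at `β₀`. -/
theorem sqLoss_augmentedAncovaModel_le_of_control [IsFiniteMeasure μ] {m : MeasurableSpace Ω}
    (hm : m ≤ m₀) {A S Y b : Ω → ℝ} {V : Ω → Fin k → ℝ} {β₀ : ℝ × ℝ × (Fin k → ℝ)}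
    (hY : MemLp Y 2 μ) (hV : ∀ i, MemLp (V · i) 2 μ) (hVm : Measurable[m] V)
    (hS : ∀ᵐ ω ∂μ, S ω = 0) (hA : ∀ᵐ ω ∂μ, A ω = 0)
    (hb : b =ᵐ[μ] fun ω => μ[Y|m] ω - (β₀.1 + ∑ i, β₀.2.2 i * V ω i))
    (β : ℝ × ℝ × (Fin k → ℝ)) :
    sqLoss μ Y (augmentedAncovaModel A S b V β₀) ≤ sqLoss μ Y (augmentedAncovaModel A S b V β) := by
  have hshift : ∀ γ, augmentedAncovaModel A S b V γ =ᵐ[μ] μ[Y|m] + ancovaModel 0 V (γ - β₀) :=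
    fun γ => by
      filter_upwards [hS, hA, hb] with ω hSω hAω hbω
      simp only [augmentedAncovaModel, ancovaModel, Pi.add_apply, hSω, hAω, hbω, Prod.fst_sub,
        Prod.snd_sub, Pi.sub_apply, Pi.zero_apply, sub_mul, Finset.sum_sub_distrib]
      ring
  have hzero : μ[Y|m] + ancovaModel 0 V 0 = μ[Y|m] := by ext ω; simp [ancovaModel]
  rw [sqLoss_congr_ae (hshift β₀), sqLoss_congr_ae (hshift β), sub_self, hzero]
  refine sqLoss_condExp_le hm hY
    ((hY.condExp one_le_two).add (memLp_ancovaModel MemLp.zero hV _))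
    (stronglyMeasurable_condExp.add (Measurable.stronglyMeasurable ?_))
  unfold ancovaModel
  fun_prop

end Ancova

theorem augmented_ancova_loss_minimization_general
    {Ω : Type*} [MeasurableSpace Ω] (P : Measure Ω) [IsProbabilityMeasure P]
    {d k₁ : ℕ}
    -- covariates, treatment and trial indicators
    (X : Ω → Fin d → ℝ) (hX : Measurable X)
    (A S : Ω → ℝ) (hA : Measurable A) (hS : Measurable S)
    (hA01 : ∀ ω, A ω = 0 ∨ A ω = 1) (hS01 : ∀ ω, S ω = 0 ∨ S ω = 1)
    -- potential outcomes and observed outcome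
    (Y0 Y1 : Ω → ℝ) (hY0 : MemLp Y0 2 P) (hY1 : MemLp Y1 2 P)
    (Y : Ω → ℝ) (hY : ∀ ω, Y ω = A ω * Y1 ω + (1 - A ω) * Y0 ω)
    -- external controls are untreated
    (hEC : ∀ᵐ ω ∂P, S ω = 0 → A ω = 0)
    -- working-model basis functions
    (pμ : (Fin d → ℝ) → Fin k₁ → ℝ) (hpμ : Measurable pμ)
    (hpμL2 : ∀ i, MemLp (fun ω => pμ (X ω) i) 2 P)
    -- `β* = (β*_int, β*_A, β*_X)` is the unique minimizer of the squared loss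
    -- `β ↦ E[(Y − μ̄(·;β))² | S = 1]`
    (βstar : ℝ × ℝ × (Fin k₁ → ℝ))
    (hmin : ∀ β : ℝ × ℝ × (Fin k₁ → ℝ),
      ∫ ω, (Y ω - (βstar.1 + βstar.2.1 * A ω + ∑ i, βstar.2.2 i * pμ (X ω) i)) ^ 2
          ∂(P[|{ω | S ω = 1}])
        ≤ ∫ ω, (Y ω - (β.1 + β.2.1 * A ω + ∑ i, β.2.2 i * pμ (X ω) i)) ^ 2
          ∂(P[|{ω | S ω = 1}]))
    -- the bias function `b₀`: σ(X)-measurable, square-integrable over the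
    -- external controls, and equal (a.e. under `P(·|S=0)`) to
    -- `E_{P(·|S=0)}[Y | σ(X)] − (β*_int + β*_X ⬝ p_μ(X))`
    (b0 : Ω → ℝ)
    (hb0L2 : MemLp b0 2 (P[|{ω | S ω = 0}]))
    (hb0 : b0 =ᵐ[P[|{ω | S ω = 0}]] fun ω =>
      ((P[|{ω | S ω = 0}])[Y | MeasurableSpace.comap X inferInstance]) ω
        - (βstar.1 + ∑ i, βstar.2.2 i * pμ (X ω) i)) :
    -- conclusion: `β*` minimizes the combined-population squared loss of the
    -- augmented ANCOVA model
    ∀ β : ℝ × ℝ × (Fin k₁ → ℝ),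
      ∫ ω, (Y ω - (β.1 + β.2.1 * A ω + ∑ i, β.2.2 i * pμ (X ω) i
          + (1 - S ω) * b0 ω)) ^ 2 ∂P
        ≥ ∫ ω, (Y ω - (βstar.1 + βstar.2.1 * A ω + ∑ i, βstar.2.2 i * pμ (X ω) i
          + (1 - S ω) * b0 ω)) ^ 2 ∂P := by
  intro β
  have htrial : MeasurableSet {ω | S ω = 1} := hS (measurableSet_singleton 1)
  have hcontrol : {ω | S ω = 1}ᶜ = {ω | S ω = 0} := by
    ext ω; rcases hS01 ω with h | h <;> simp [h]
  have hAbdd : MemLp A ∞ P := memLp_top_of_bound hA.aestronglyMeasurable 1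
    (ae_of_all _ fun ω => by rcases hA01 ω with h | h <;> simp [h])
  have hYL2 : MemLp Y 2 P := by
    rw [show Y = _ from funext hY]
    exact (hY1.mul hAbdd).add (hY0.mul ((memLp_top_const 1).sub hAbdd))
  have hloss : ∀ γ, Integrable
      (fun ω => (Y ω - augmentedAncovaModel A S b0 (fun ω => pμ (X ω)) γ ω) ^ 2) P := fun γ =>
    have hmodel := memLp_augmentedAncovaModel (hAbdd.mono_exponent le_top) hpμL2 hS hS01 hb0L2 γ
    (hYL2.sub hmodel).integrable_sq
  refine integral_le_integral_of_cond_le_of_cond_compl_le htrial (hloss βstar) (hloss β) ?_ ?_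
  · have htrial_ae : ∀ᵐ ω ∂(P[|{ω | S ω = 1}]), S ω = 1 := ae_cond_mem htrial
    calc _ = sqLoss _ Y (ancovaModel A (fun ω => pμ (X ω)) βstar) :=
          sqLoss_augmentedAncovaModel_of_trial htrial_ae βstar
      _ ≤ sqLoss _ Y (ancovaModel A (fun ω => pμ (X ω)) β) := hmin β
      _ = _ := (sqLoss_augmentedAncovaModel_of_trial htrial_ae β).symm
  · have hcontrol_ae : ∀ᵐ ω ∂(P[|{ω | S ω = 0}]), S ω = 0 :=
      ae_cond_mem (hS (measurableSet_singleton 0))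
    have huntreated : ∀ᵐ ω ∂(P[|{ω | S ω = 0}]), A ω = 0 := by
      filter_upwards [cond_absolutelyContinuous.ae_le hEC, hcontrol_ae] with ω h hω
      exact h hω
    rw [hcontrol]
    exact sqLoss_augmentedAncovaModel_le_of_control hX.comap_le hYL2.cond
      (fun i => (hpμL2 i).cond) (hpμ.comp (comap_measurable X)) hcontrol_ae huntreated hb0 β

/-- Theorem 1(i), identification / loss-minimization part: under
randomization in the trial, the randomized-experiment least-squares parameter
`β*` (the unique minimizer of the trial squared loss for the ANCOVA working
model `μ̄(ω;β) = β_int + β_A A(ω) + β_X ⬝ p_μ(X(ω))`) also minimizes the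
combined-population squared loss for the augmented ANCOVA model
`μ̄_aug(ω;β) = μ̄(ω;β) + (1 − S(ω))·b₀(ω)`, where
`b₀ = E_{P(·|S=0)}[Y | σ(X)] − (β*_int + β*_X ⬝ p_μ(X))` is the bias function:
for every `β`, `E_P[(Y − μ̄_aug(·;β))²] ≥ E_P[(Y − μ̄_aug(·;β*))²]`. -/
theorem augmented_ancova_loss_minimization
    {Ω : Type*} [MeasurableSpace Ω] (P : Measure Ω) [IsProbabilityMeasure P]
    {d k₁ : ℕ}
    -- covariates, treatment and trial indicators
    (X : Ω → Fin d → ℝ) (hX : Measurable X)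
    (A S : Ω → ℝ) (hA : Measurable A) (hS : Measurable S)
    (hA01 : ∀ ω, A ω = 0 ∨ A ω = 1) (hS01 : ∀ ω, S ω = 0 ∨ S ω = 1)
    -- potential outcomes and observed outcome
    (Y0 Y1 : Ω → ℝ) (hY0 : MemLp Y0 2 P) (hY1 : MemLp Y1 2 P)
    (Y : Ω → ℝ) (hY : ∀ ω, Y ω = A ω * Y1 ω + (1 - A ω) * Y0 ω)
    -- a nontrivial trial population
    (hS1pos : 0 < P {ω | S ω = 1}) (hS1lt : P {ω | S ω = 1} < 1)
    -- external controls are untreated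
    (hEC : ∀ᵐ ω ∂P, S ω = 0 → A ω = 0)
    -- randomization: `A ⫫ (X, Y0, Y1)` under `P(·|S=1)`, and `π = P(A=1|S=1) ∈ (0,1)`
    (hindep : IndepFun A (fun ω => (X ω, Y0 ω, Y1 ω)) (P[|{ω | S ω = 1}]))
    (hπpos : 0 < (P[|{ω | S ω = 1}]) {ω | A ω = 1})
    (hπlt : (P[|{ω | S ω = 1}]) {ω | A ω = 1} < 1)
    -- working-model basis functions
    (pμ : (Fin d → ℝ) → Fin k₁ → ℝ) (hpμ : Measurable pμ)
    (hpμL2 : ∀ i, MemLp (fun ω => pμ (X ω) i) 2 P)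
    -- the regressor vector `Z = (1, A, p_μ(X)ᵀ)ᵀ` has positive definite Gram
    -- matrix `E[Z Zᵀ | S = 1]`
    (Z : Ω → Fin (k₁ + 2) → ℝ)
    (hZ : ∀ ω, Z ω = Fin.cons 1 (Fin.cons (A ω) (pμ (X ω))))
    (hGram : (Matrix.of fun i j : Fin (k₁ + 2) =>
      ∫ ω, Z ω i * Z ω j ∂(P[|{ω | S ω = 1}])).PosDef)
    -- `β* = (β*_int, β*_A, β*_X)` is the unique minimizer of the squared loss
    -- `β ↦ E[(Y − μ̄(·;β))² | S = 1]`
    (βstar : ℝ × ℝ × (Fin k₁ → ℝ))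
    (hmin : ∀ β : ℝ × ℝ × (Fin k₁ → ℝ),
      ∫ ω, (Y ω - (βstar.1 + βstar.2.1 * A ω + ∑ i, βstar.2.2 i * pμ (X ω) i)) ^ 2
          ∂(P[|{ω | S ω = 1}])
        ≤ ∫ ω, (Y ω - (β.1 + β.2.1 * A ω + ∑ i, β.2.2 i * pμ (X ω) i)) ^ 2
          ∂(P[|{ω | S ω = 1}]))
    (huniq : ∀ β : ℝ × ℝ × (Fin k₁ → ℝ),
      ∫ ω, (Y ω - (β.1 + β.2.1 * A ω + ∑ i, β.2.2 i * pμ (X ω) i)) ^ 2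
          ∂(P[|{ω | S ω = 1}])
        = ∫ ω, (Y ω - (βstar.1 + βstar.2.1 * A ω + ∑ i, βstar.2.2 i * pμ (X ω) i)) ^ 2
          ∂(P[|{ω | S ω = 1}]) → β = βstar)
    -- the bias function `b₀`: σ(X)-measurable, square-integrable over the
    -- external controls, and equal (a.e. under `P(·|S=0)`) to
    -- `E_{P(·|S=0)}[Y | σ(X)] − (β*_int + β*_X ⬝ p_μ(X))`
    (b0 : Ω → ℝ)
    (hb0meas : Measurable[MeasurableSpace.comap X inferInstance] b0)
    (hb0L2 : MemLp b0 2 (P[|{ω | S ω = 0}]))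
    (hb0 : b0 =ᵐ[P[|{ω | S ω = 0}]] fun ω =>
      ((P[|{ω | S ω = 0}])[Y | MeasurableSpace.comap X inferInstance]) ω
        - (βstar.1 + ∑ i, βstar.2.2 i * pμ (X ω) i)) :
    -- conclusion: `β*` minimizes the combined-population squared loss of the
    -- augmented ANCOVA model
    ∀ β : ℝ × ℝ × (Fin k₁ → ℝ),
      ∫ ω, (Y ω - (β.1 + β.2.1 * A ω + ∑ i, β.2.2 i * pμ (X ω) i
          + (1 - S ω) * b0 ω)) ^ 2 ∂P
        ≥ ∫ ω, (Y ω - (βstar.1 + βstar.2.1 * A ω + ∑ i, βstar.2.2 i * pμ (X ω) i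
          + (1 - S ω) * b0 ω)) ^ 2 ∂P :=
  augmented_ancova_loss_minimization_general P X hX A S hA hS hA01 hS01 Y0 Y1 hY0 hY1 Y hY hEC pμ
    hpμ hpμL2 βstar hmin b0 hb0L2 hb0
end

section
/- Theorem 1(ii) (Identification of the ATE): β*_A = E[Y1 − Y0 | S=1]; that is, the coefficient of the treatment indicator in the population least-squares fit of the (possibly misspecified) ANCOVA working model equals the average treatment effect τ = E[Y(1) − Y(0) | S=1] among trial participants, regardless of whether the working outcome mean model is correctly specified. -/
open MeasureTheory ProbabilityTheory


private lemma integrable_mul_of_memL2 {α : Type*} [MeasurableSpace α] {μ : Measure α}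
    {f g : α → ℝ} (hf : MemLp f 2 μ) (hg : MemLp g 2 μ) :
    Integrable (fun x => f x * g x) μ := by
  have h1 := (hf.add hg).integrable_sq
  have h2 := hf.integrable_sq
  have h3 := hg.integrable_sq
  have h := (((h1.sub h2).sub h3).const_mul (1 / 2 : ℝ))
  refine h.congr (Filter.Eventually.of_forall fun x => ?_)
  simp only [Pi.add_apply, Pi.sub_apply]
  ring

private lemma foc_aux {α : Type*} [MeasurableSpace α] {μ : Measure α}
    {R g : α → ℝ} (hR : MemLp R 2 μ) (hg : MemLp g 2 μ)
    (h : ∀ t : ℝ, ∫ x, (R x) ^ 2 ∂μ ≤ ∫ x, (R x - t * g x) ^ 2 ∂μ) :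
    ∫ x, R x * g x ∂μ = 0 := by
  set b := ∫ x, R x * g x ∂μ with hb
  set c := ∫ x, (g x) ^ 2 ∂μ with hc
  have hcpos : 0 ≤ c := integral_nonneg fun x => sq_nonneg _
  have key : ∀ t : ℝ, 0 ≤ -2 * t * b + t ^ 2 * c := by
    intro t
    have hi1 := hR.integrable_sq
    have hi2 : Integrable (fun x => 2 * t * (R x * g x)) μ :=
      (integrable_mul_of_memL2 hR hg).const_mul (2 * t)
    have hi3 : Integrable (fun x => t ^ 2 * (g x) ^ 2) μ :=
      hg.integrable_sq.const_mul (t ^ 2)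
    have hi12 : Integrable (fun x => (R x) ^ 2 - 2 * t * (R x * g x)) μ := hi1.sub hi2
    have hexp : ∫ x, (R x - t * g x) ^ 2 ∂μ
        = ∫ x, (R x) ^ 2 ∂μ - 2 * t * b + t ^ 2 * c := by
      have heq : (fun x => (R x - t * g x) ^ 2)
          = fun x => ((R x) ^ 2 - 2 * t * (R x * g x)) + t ^ 2 * (g x) ^ 2 :=
        funext fun x => by ring
      rw [heq, integral_add hi12 hi3, integral_sub hi1 hi2,
        integral_const_mul, integral_const_mul, hb, hc]
    have ht := h t
    rw [hexp] at ht
    linarith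
  by_contra hbne
  have hb2 : 0 < b ^ 2 := by positivity
  rcases eq_or_lt_of_le hcpos with hc0 | hc0
  · have k1 := key 1
    have k2 := key (-1)
    rw [← hc0] at k1 k2
    apply hbne; nlinarith
  · have hk := key (b / c)
    have h2 : -2 * (b / c) * b + (b / c) ^ 2 * c = -(b ^ 2 / c) := by
      field_simp; ring
    rw [h2] at hk
    have hq : 0 < b ^ 2 / c := div_pos hb2 hc0
    linarith

/-- Theorem 1(ii), identification of the ATE: under randomization
in the trial (`S = 1`), the treatment coefficient `β*_A` of the population
least-squares fit of the (possibly misspecified) ANCOVA working model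
`μ̄(ω;β) = β_int + β_A A(ω) + β_X ⬝ p_μ(X(ω))` over `P(·|S=1)` equals the
average treatment effect `τ = E[Y1 − Y0 | S = 1]`. -/
theorem ancova_identifies_ATE
    {Ω : Type*} [MeasurableSpace Ω] (P : Measure Ω) [IsProbabilityMeasure P]
    {d k₁ : ℕ}
    -- covariates, treatment and trial indicators
    (X : Ω → Fin d → ℝ) (hX : Measurable X)
    (A S : Ω → ℝ) (hA : Measurable A) (hS : Measurable S)
    (hA01 : ∀ ω, A ω = 0 ∨ A ω = 1) (hS01 : ∀ ω, S ω = 0 ∨ S ω = 1)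
    -- potential outcomes and observed outcome
    (Y0 Y1 : Ω → ℝ) (hY0 : MemLp Y0 2 P) (hY1 : MemLp Y1 2 P)
    (Y : Ω → ℝ) (hY : ∀ ω, Y ω = A ω * Y1 ω + (1 - A ω) * Y0 ω)
    -- a nontrivial trial population
    (hS1pos : 0 < P {ω | S ω = 1}) (hS1lt : P {ω | S ω = 1} < 1)
    -- external controls are untreated
    (hEC : ∀ᵐ ω ∂P, S ω = 0 → A ω = 0)
    -- randomization: `A ⫫ (X, Y0, Y1)` under `P(·|S=1)`, and `π = P(A=1|S=1) ∈ (0,1)`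
    (hindep : IndepFun A (fun ω => (X ω, Y0 ω, Y1 ω)) (P[|{ω | S ω = 1}]))
    (hπpos : 0 < (P[|{ω | S ω = 1}]) {ω | A ω = 1})
    (hπlt : (P[|{ω | S ω = 1}]) {ω | A ω = 1} < 1)
    -- working-model basis functions
    (pμ : (Fin d → ℝ) → Fin k₁ → ℝ) (hpμ : Measurable pμ)
    (hpμL2 : ∀ i, MemLp (fun ω => pμ (X ω) i) 2 P)
    -- the regressor vector `Z = (1, A, p_μ(X)ᵀ)ᵀ` has positive definite Gram
    -- matrix `E[Z Zᵀ | S = 1]`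
    (Z : Ω → Fin (k₁ + 2) → ℝ)
    (hZ : ∀ ω, Z ω = Fin.cons 1 (Fin.cons (A ω) (pμ (X ω))))
    (hGram : (Matrix.of fun i j : Fin (k₁ + 2) =>
      ∫ ω, Z ω i * Z ω j ∂(P[|{ω | S ω = 1}])).PosDef)
    -- `β* = (β*_int, β*_A, β*_X)` is the unique minimizer of the squared loss
    -- `β ↦ E[(Y − μ̄(·;β))² | S = 1]`
    (βstar : ℝ × ℝ × (Fin k₁ → ℝ))
    (hmin : ∀ β : ℝ × ℝ × (Fin k₁ → ℝ),
      ∫ ω, (Y ω - (βstar.1 + βstar.2.1 * A ω + ∑ i, βstar.2.2 i * pμ (X ω) i)) ^ 2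
          ∂(P[|{ω | S ω = 1}])
        ≤ ∫ ω, (Y ω - (β.1 + β.2.1 * A ω + ∑ i, β.2.2 i * pμ (X ω) i)) ^ 2
          ∂(P[|{ω | S ω = 1}]))
    (huniq : ∀ β : ℝ × ℝ × (Fin k₁ → ℝ),
      ∫ ω, (Y ω - (β.1 + β.2.1 * A ω + ∑ i, β.2.2 i * pμ (X ω) i)) ^ 2
          ∂(P[|{ω | S ω = 1}])
        = ∫ ω, (Y ω - (βstar.1 + βstar.2.1 * A ω + ∑ i, βstar.2.2 i * pμ (X ω) i)) ^ 2
          ∂(P[|{ω | S ω = 1}]) → β = βstar) :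
    βstar.2.1 = ∫ ω, (Y1 ω - Y0 ω) ∂(P[|{ω | S ω = 1}]) := by

  classical
  set s : Set Ω := {ω | S ω = 1} with hsdef
  have hs0 : P s ≠ 0 := hS1pos.ne'
  set Q : Measure Ω := P[|s] with hQdef
  haveI hQprob : IsProbabilityMeasure Q := cond_isProbabilityMeasure hs0
  have memQ : ∀ {f : Ω → ℝ}, MemLp f 2 P → MemLp f 2 Q := by
    intro f hf
    have h1 : MemLp f 2 (P.restrict s) := hf.restrict s
    have h2 := h1.smul_measure (c := (P s)⁻¹) (ENNReal.inv_ne_top.mpr hs0)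
    exact h2
  have hsetA : MeasurableSet {ω | A ω = 1} := hA (measurableSet_singleton 1)
  -- L² facts under Q
  have hY0Q : MemLp Y0 2 Q := memQ hY0
  have hY1Q : MemLp Y1 2 Q := memQ hY1
  have hAQ : MemLp A 2 Q := MemLp.of_bound hA.aestronglyMeasurable 1
    (Filter.Eventually.of_forall fun ω => by
      rcases hA01 ω with h | h <;> simp [h])
  have hpQ : ∀ i, MemLp (fun ω => pμ (X ω) i) 2 Q := fun i => memQ (hpμL2 i)
  have hYQ : MemLp Y 2 Q := by
    have hb : MemLp (fun ω => |Y0 ω| + |Y1 ω|) 2 Q := hY0Q.abs.add hY1Q.abs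
    refine MemLp.of_le hb ?_ (Filter.Eventually.of_forall fun ω => ?_)
    · have hYfun : Y = fun ω => A ω * Y1 ω + (1 - A ω) * Y0 ω := funext hY
      rw [hYfun]
      exact (hA.aestronglyMeasurable.mul hY1Q.1).add
        ((aestronglyMeasurable_const.sub hA.aestronglyMeasurable).mul hY0Q.1)
    · have hnn : (0:ℝ) ≤ |Y0 ω| + |Y1 ω| := by positivity
      rw [Real.norm_eq_abs, Real.norm_eq_abs, abs_of_nonneg hnn, hY ω]
      rcases hA01 ω with h | h <;> simp [h] <;>
        linarith [abs_nonneg (Y1 ω), abs_nonneg (Y0 ω), le_abs_self (Y0 ω),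
          le_abs_self (Y1 ω)]
  set M : Ω → ℝ := fun ω => βstar.1 + βstar.2.1 * A ω + ∑ i, βstar.2.2 i * pμ (X ω) i
    with hMdef
  have hMQ : MemLp M 2 Q :=
    ((memLp_const βstar.1).add (hAQ.const_mul βstar.2.1)).add
      (memLp_finset_sum (f := fun i ω => βstar.2.2 i * pμ (X ω) i) Finset.univ
        fun i _ => (hpQ i).const_mul (βstar.2.2 i))
  set R : Ω → ℝ := fun ω => Y ω - M ω with hRdef
  have hRQ : MemLp R 2 Q := hYQ.sub hMQ
  -- integrability under Q
  have iY : Integrable Y Q := hYQ.integrable one_le_two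
  have iA : Integrable A Q := hAQ.integrable one_le_two
  have iY0 : Integrable Y0 Q := hY0Q.integrable one_le_two
  have iY1 : Integrable Y1 Q := hY1Q.integrable one_le_two
  have ip : ∀ i, Integrable (fun ω => pμ (X ω) i) Q := fun i => (hpQ i).integrable one_le_two
  have iM : Integrable M Q := hMQ.integrable one_le_two
  have iAY1 : Integrable (fun ω => A ω * Y1 ω) Q := integrable_mul_of_memL2 hAQ hY1Q
  have iAY0 : Integrable (fun ω => A ω * Y0 ω) Q := integrable_mul_of_memL2 hAQ hY0Q
  have iAp : ∀ i, Integrable (fun ω => A ω * pμ (X ω) i) Q :=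
    fun i => integrable_mul_of_memL2 hAQ (hpQ i)
  -- independence consequences
  have hiY1 : IndepFun A Y1 Q := by
    have h := hindep.comp measurable_id (measurable_snd.comp measurable_snd)
    exact h
  have hiY0 : IndepFun A Y0 Q := by
    have h := hindep.comp measurable_id (measurable_fst.comp measurable_snd)
    exact h
  have hip : ∀ i, IndepFun A (fun ω => pμ (X ω) i) Q := by
    intro i
    have h := hindep.comp measurable_id ((measurable_pi_apply i).comp (hpμ.comp measurable_fst))
    exact h
  have hAY1 : ∫ ω, A ω * Y1 ω ∂Q = (∫ ω, A ω ∂Q) * ∫ ω, Y1 ω ∂Q :=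
    hiY1.integral_mul_eq_mul_integral iA.1 iY1.1
  have hAY0 : ∫ ω, A ω * Y0 ω ∂Q = (∫ ω, A ω ∂Q) * ∫ ω, Y0 ω ∂Q :=
    hiY0.integral_mul_eq_mul_integral iA.1 iY0.1
  have hApb : ∀ i, ∫ ω, A ω * pμ (X ω) i ∂Q = (∫ ω, A ω ∂Q) * ∫ ω, pμ (X ω) i ∂Q :=
    fun i => (hip i).integral_mul_eq_mul_integral iA.1 (ip i).1
  -- value of ∫ Y
  have hYint : ∫ ω, Y ω ∂Q
      = (∫ ω, A ω ∂Q) * (∫ ω, Y1 ω ∂Q)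
        + ((∫ ω, Y0 ω ∂Q) - (∫ ω, A ω ∂Q) * ∫ ω, Y0 ω ∂Q) := by
    have hY' : (fun ω => Y ω) = fun ω => A ω * Y1 ω + (Y0 ω - A ω * Y0 ω) :=
      funext fun ω => by rw [hY ω]; ring
    have i2 : Integrable (fun ω => Y0 ω - A ω * Y0 ω) Q := iY0.sub iAY0
    rw [hY', integral_add iAY1 i2, integral_sub iY0 iAY0, hAY1, hAY0]
  -- value of ∫ M
  have hMint : ∫ ω, M ω ∂Q
      = βstar.1 + βstar.2.1 * (∫ ω, A ω ∂Q)
        + ∑ i, βstar.2.2 i * ∫ ω, pμ (X ω) i ∂Q := by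
    have i1 : Integrable (fun ω => βstar.1 + βstar.2.1 * A ω) Q :=
      (integrable_const _).add (iA.const_mul _)
    have i2 : Integrable (fun ω => ∑ i, βstar.2.2 i * pμ (X ω) i) Q :=
      integrable_finset_sum _ fun i _ => (ip i).const_mul _
    rw [hMdef]
    rw [integral_add i1 i2, integral_add (integrable_const _) (iA.const_mul _),
      integral_const, integral_const_mul,
      integral_finset_sum _ fun i _ => (ip i).const_mul _]
    simp only [integral_const_mul, measure_univ, probReal_univ, ENNReal.toReal_one, smul_eq_mul, one_mul]
  -- ∫ Y·A and ∫ M·A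
  have hYA : ∫ ω, Y ω * A ω ∂Q = (∫ ω, A ω ∂Q) * ∫ ω, Y1 ω ∂Q := by
    have hpt : (fun ω => Y ω * A ω) = fun ω => A ω * Y1 ω :=
      funext fun ω => by rcases hA01 ω with h | h <;> simp [hY ω, h]
    rw [hpt, hAY1]
  have hMA : ∫ ω, M ω * A ω ∂Q
      = βstar.1 * (∫ ω, A ω ∂Q) + βstar.2.1 * (∫ ω, A ω ∂Q)
        + (∑ i, βstar.2.2 i * ∫ ω, pμ (X ω) i ∂Q) * ∫ ω, A ω ∂Q := by
    have hpt : (fun ω => M ω * A ω)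
        = fun ω => βstar.1 * A ω
            + (βstar.2.1 * A ω + ∑ i, βstar.2.2 i * (A ω * pμ (X ω) i)) := by
      funext ω
      rcases hA01 ω with h | h <;> simp [hMdef, h] <;> ring
    have j2 : Integrable (fun ω => ∑ i, βstar.2.2 i * (A ω * pμ (X ω) i)) Q :=
      integrable_finset_sum _ fun i _ => (iAp i).const_mul _
    have j1 : Integrable
        (fun ω => βstar.2.1 * A ω + ∑ i, βstar.2.2 i * (A ω * pμ (X ω) i)) Q :=
      (iA.const_mul _).add j2
    rw [hpt, integral_add (iA.const_mul _) j1, integral_add (iA.const_mul _) j2,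
      integral_const_mul, integral_const_mul,
      integral_finset_sum _ fun i _ => (iAp i).const_mul _]
    simp only [integral_const_mul, hApb]
    rw [Finset.sum_mul]
    have hsum : ∑ i, βstar.2.2 i * ((∫ ω, A ω ∂Q) * ∫ ω, pμ (X ω) i ∂Q)
        = ∑ i, (βstar.2.2 i * ∫ ω, pμ (X ω) i ∂Q) * ∫ ω, A ω ∂Q :=
      Finset.sum_congr rfl fun i _ => by ring
    rw [hsum]
    ring
  -- first-order conditions
  have foc1 : ∫ ω, R ω * 1 ∂Q = 0 := by
    refine foc_aux hRQ (memLp_const 1) fun t => ?_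
    have h := hmin (βstar.1 + t, βstar.2.1, βstar.2.2)
    calc ∫ ω, R ω ^ 2 ∂Q
        = ∫ ω, (Y ω - (βstar.1 + βstar.2.1 * A ω + ∑ i, βstar.2.2 i * pμ (X ω) i)) ^ 2 ∂Q := by
          simp only [hRdef, hMdef]
      _ ≤ ∫ ω, (Y ω - ((βstar.1 + t) + βstar.2.1 * A ω + ∑ i, βstar.2.2 i * pμ (X ω) i)) ^ 2 ∂Q := h
      _ = ∫ ω, (R ω - t * 1) ^ 2 ∂Q := by
          congr 1
          funext ω
          simp only [hRdef, hMdef]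
          ring
  have focA : ∫ ω, R ω * A ω ∂Q = 0 := by
    refine foc_aux hRQ hAQ fun t => ?_
    have h := hmin (βstar.1, βstar.2.1 + t, βstar.2.2)
    calc ∫ ω, R ω ^ 2 ∂Q
        = ∫ ω, (Y ω - (βstar.1 + βstar.2.1 * A ω + ∑ i, βstar.2.2 i * pμ (X ω) i)) ^ 2 ∂Q := by
          simp only [hRdef, hMdef]
      _ ≤ ∫ ω, (Y ω - (βstar.1 + (βstar.2.1 + t) * A ω + ∑ i, βstar.2.2 i * pμ (X ω) i)) ^ 2 ∂Q := h
      _ = ∫ ω, (R ω - t * A ω) ^ 2 ∂Q := by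
          congr 1
          funext ω
          simp only [hRdef, hMdef]
          ring
  -- translate the FOCs into equations between real numbers
  have eq1 : (∫ ω, A ω ∂Q) * (∫ ω, Y1 ω ∂Q)
      + ((∫ ω, Y0 ω ∂Q) - (∫ ω, A ω ∂Q) * ∫ ω, Y0 ω ∂Q)
      = βstar.1 + βstar.2.1 * (∫ ω, A ω ∂Q)
        + ∑ i, βstar.2.2 i * ∫ ω, pμ (X ω) i ∂Q := by
    have hsplit : ∫ ω, R ω * 1 ∂Q = ∫ ω, Y ω ∂Q - ∫ ω, M ω ∂Q := by
      have hpt : (fun ω => R ω * 1) = fun ω => Y ω - M ω :=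
        funext fun ω => by simp [hRdef]
      rw [hpt, integral_sub iY iM]
    rw [hsplit, hYint, hMint] at foc1
    linarith
  have eq2 : (∫ ω, A ω ∂Q) * (∫ ω, Y1 ω ∂Q)
      = βstar.1 * (∫ ω, A ω ∂Q) + βstar.2.1 * (∫ ω, A ω ∂Q)
        + (∑ i, βstar.2.2 i * ∫ ω, pμ (X ω) i ∂Q) * ∫ ω, A ω ∂Q := by
    have hsplit : ∫ ω, R ω * A ω ∂Q = ∫ ω, Y ω * A ω ∂Q - ∫ ω, M ω * A ω ∂Q := by
      have hpt : (fun ω => R ω * A ω) = fun ω => Y ω * A ω - M ω * A ω :=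
        funext fun ω => by simp [hRdef]; ring
      have jYA : Integrable (fun ω => Y ω * A ω) Q := integrable_mul_of_memL2 hYQ hAQ
      have jMA : Integrable (fun ω => M ω * A ω) Q := integrable_mul_of_memL2 hMQ hAQ
      rw [hpt, integral_sub jYA jMA]
    rw [hsplit, hYA, hMA] at focA
    linarith
  -- the value of ∫ A and its bounds
  have haval : ∫ ω, A ω ∂Q = (Q {ω | A ω = 1}).toReal := by
    have hind : ∫ ω, A ω ∂Q = ∫ ω, Set.indicator {ω | A ω = 1} (fun _ => (1:ℝ)) ω ∂Q := by
      refine integral_congr_ae (Filter.Eventually.of_forall fun ω => ?_)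
      rcases hA01 ω with h | h
      · have hmem : ω ∉ {ω | A ω = 1} := by simp [Set.mem_setOf_eq, h]
        rw [Set.indicator_of_notMem hmem, h]
      · have hmem : ω ∈ {ω | A ω = 1} := h
        rw [Set.indicator_of_mem hmem, h]
    rw [hind, integral_indicator_const (1:ℝ) hsetA, smul_eq_mul, mul_one, measureReal_def]
  have ha0 : 0 < ∫ ω, A ω ∂Q := by
    rw [haval]; exact ENNReal.toReal_pos hπpos.ne' (measure_ne_top _ _)
  have ha1 : (∫ ω, A ω ∂Q) < 1 := by
    rw [haval]
    have h := (ENNReal.toReal_lt_toReal (measure_ne_top Q _) ENNReal.one_ne_top).mpr hπlt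
    simpa using h
  -- final algebra
  set a := ∫ ω, A ω ∂Q with hadef
  set y0 := ∫ ω, Y0 ω ∂Q with hy0def
  set y1 := ∫ ω, Y1 ω ∂Q with hy1def
  set m := ∑ i, βstar.2.2 i * ∫ ω, pμ (X ω) i ∂Q with hmdef
  have hy1v : y1 = βstar.1 + βstar.2.1 + m :=
    mul_left_cancel₀ ha0.ne' (by linear_combination eq2)
  have h1a : (1 : ℝ) - a ≠ 0 := by
    intro hcontra; rw [sub_eq_zero] at hcontra; exact absurd hcontra.symm ha1.ne
  have hy0v : y0 = βstar.1 + m :=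
    mul_left_cancel₀ h1a (by linear_combination eq1 - a * hy1v)
  have hfinal : βstar.2.1 = y1 - y0 := by linarith
  rw [integral_sub iY1 iY0, hfinal]
end

section
/- Under randomization, the population ANCOVA coefficient of the treatment indicator equals the difference of treatment-arm outcome means regardless of misspecification of the linear adjustment: β*_A = E[Y·A]/π − E[Y·(1−A)]/(1−π). -/
open MeasureTheory ProbabilityTheory

/-! The first-order conditions of least squares in the directions `1` and `A` say that the
residual `R = Y - β*_0 - β*_A A - β*_W ⬝ W` has mean zero and is orthogonal to `A`, so
`Cov(A, R) = 0`. Randomization gives `Cov(A, β*_W ⬝ W) = 0`, hence `Cov(A, Y) = β*_A Var(A)`: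
the adjusted coefficient is the unadjusted slope. For binary `A`, `Var(A) = π (1 - π)` and
`Cov(A, Y) = (1 - π) E[Y A] - π E[Y (1 - A)]`. -/

theorem eq_zero_of_forall_sq_mul_sub_nonneg {c d : ℝ} (h : ∀ t : ℝ, 0 ≤ t ^ 2 * d - 2 * t * c) :
    c = 0 := by
  have hmin : IsLocalMin (fun t : ℝ => t ^ 2 * d - 2 * t * c) 0 :=
    Filter.Eventually.of_forall fun t => by simpa using h t
  have hderiv : HasDerivAt (fun t : ℝ => t ^ 2 * d - 2 * t * c) (-2 * c) 0 := by
    simpa using ((hasDerivAt_pow 2 (0 : ℝ)).mul_const d).fun_sub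
      (((hasDerivAt_id (0 : ℝ)).const_mul 2).mul_const c)
  linarith [hmin.hasDerivAt_eq_zero hderiv]

section

variable {Ω : Type*} [MeasurableSpace Ω] {μ : Measure Ω}

theorem integral_mul_eq_zero_of_forall_integral_sq_le {R g : Ω → ℝ} (hR : MemLp R 2 μ)
    (hg : MemLp g 2 μ) (hmin : ∀ t : ℝ, ∫ ω, R ω ^ 2 ∂μ ≤ ∫ ω, (R ω - t * g ω) ^ 2 ∂μ) :
    ∫ ω, g ω * R ω ∂μ = 0 := by
  refine eq_zero_of_forall_sq_mul_sub_nonneg (d := ∫ ω, g ω ^ 2 ∂μ) fun t => ?_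
  have hexpand : ∫ ω, (R ω - t * g ω) ^ 2 ∂μ
      = ∫ ω, R ω ^ 2 ∂μ - 2 * t * ∫ ω, g ω * R ω ∂μ + t ^ 2 * ∫ ω, g ω ^ 2 ∂μ := by
    have hgR : Integrable (fun ω => g ω * R ω) μ := hg.integrable_mul hR
    calc ∫ ω, (R ω - t * g ω) ^ 2 ∂μ
        = ∫ ω, R ω ^ 2 - 2 * t * (g ω * R ω) + t ^ 2 * g ω ^ 2 ∂μ := by
          congr 1; ext ω; ring
      _ = _ := by
          have hsub : Integrable (fun ω => R ω ^ 2 - 2 * t * (g ω * R ω)) μ :=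
            hR.integrable_sq.sub (hgR.const_mul _)
          rw [integral_add hsub (hg.integrable_sq.const_mul _),
            integral_sub hR.integrable_sq (hgR.const_mul _), integral_const_mul, integral_const_mul]
  linarith [hmin t]

variable {A : Ω → ℝ}

theorem integral_eq_measureReal_of_forall_eq_zero_or_eq_one (hA : Measurable A)
    (h01 : ∀ ω, A ω = 0 ∨ A ω = 1) : μ[A] = μ.real {ω | A ω = 1} := by
  calc μ[A] = ∫ ω, {ω | A ω = 1}.indicator 1 ω ∂μ := by
        congr 1; ext ω; rcases h01 ω with h | h <;> simp [h]
    _ = μ.real {ω | A ω = 1} := integral_indicator_one (hA (measurableSet_singleton 1))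

variable [IsProbabilityMeasure μ]

theorem memLp_of_forall_eq_zero_or_eq_one (hA : Measurable A)
    (h01 : ∀ ω, A ω = 0 ∨ A ω = 1) (p : ENNReal) : MemLp A p μ :=
  MemLp.of_bound hA.aestronglyMeasurable 1 <| ae_of_all _ fun ω => by
    rcases h01 ω with h | h <;> simp [h]

theorem covariance_self_eq_of_forall_eq_zero_or_eq_one (hA : Measurable A)
    (h01 : ∀ ω, A ω = 0 ∨ A ω = 1) : cov[A, A; μ] = μ[A] * (1 - μ[A]) := by
  have hAA : A * A = A := by
    ext ω; rcases h01 ω with h | h <;> simp [h]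
  have hL2 := memLp_of_forall_eq_zero_or_eq_one (μ := μ) hA h01 2
  rw [covariance_eq_sub hL2 hL2, hAA]
  ring

variable {X R Y : Ω → ℝ}

theorem covariance_eq_zero_of_forall_integral_sq_le (hX : MemLp X 2 μ) (hR : MemLp R 2 μ)
    (hmin : ∀ s t : ℝ, ∫ ω, R ω ^ 2 ∂μ ≤ ∫ ω, (R ω - (s + t * X ω)) ^ 2 ∂μ) :
    cov[X, R; μ] = 0 := by
  have hmean : μ[R] = 0 := by
    simpa using integral_mul_eq_zero_of_forall_integral_sq_le hR (memLp_const 1) fun t => by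
      simpa using hmin t 0
  have horth : ∫ ω, X ω * R ω ∂μ = 0 :=
    integral_mul_eq_zero_of_forall_integral_sq_le hR hX fun t => by simpa using hmin 0 t
  rw [covariance_eq_sub hX hR, hmean, mul_zero, sub_zero]
  exact horth

theorem covariance_eq_one_sub_mul_integral_mul_sub_mul_integral_mul_one_sub (hX : MemLp X 2 μ)
    (hY : MemLp Y 2 μ) :
    cov[X, Y; μ] = (1 - μ[X]) * ∫ ω, Y ω * X ω ∂μ - μ[X] * ∫ ω, Y ω * (1 - X ω) ∂μ := by
  have hYX : Integrable (fun ω => Y ω * X ω) μ := hY.integrable_mul hX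
  have hsplit : ∫ ω, Y ω * (1 - X ω) ∂μ = μ[Y] - ∫ ω, Y ω * X ω ∂μ := by
    rw [← integral_sub (hY.integrable one_le_two) hYX]
    simp only [mul_one_sub]
  rw [covariance_eq_sub hX hY, hsplit]
  simp only [Pi.mul_apply, mul_comm (X _)]
  ring

end

theorem ancova_treatment_coefficient_general
    {Ω : Type*} [MeasurableSpace Ω] (P : Measure Ω) [IsProbabilityMeasure P]
    {k : ℕ}
    (A : Ω → ℝ) (hA : Measurable A) (hA01 : ∀ ω, A ω = 0 ∨ A ω = 1)
    (π : ℝ) (hπ : π = (P {ω | A ω = 1}).toReal) (hπ0 : 0 < π) (hπ1 : π < 1)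
    (W : Ω → Fin k → ℝ)
    (hWL2 : ∀ i, MemLp (fun ω => W ω i) 2 P)
    (Y : Ω → ℝ) (hYL2 : MemLp Y 2 P)
    -- randomized treatment assignment
    (hindep : IndepFun A W P)
    -- `β* = (β*_0, β*_A, β*_W)` is the unique least-squares minimizer
    (βstar : ℝ × ℝ × (Fin k → ℝ))
    (hmin : ∀ β : ℝ × ℝ × (Fin k → ℝ),
      ∫ ω, (Y ω - (βstar.1 + βstar.2.1 * A ω + ∑ i, βstar.2.2 i * W ω i)) ^ 2 ∂P
        ≤ ∫ ω, (Y ω - (β.1 + β.2.1 * A ω + ∑ i, β.2.2 i * W ω i)) ^ 2 ∂P) :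
    βstar.2.1 = (∫ ω, Y ω * A ω ∂P) / π - (∫ ω, Y ω * (1 - A ω) ∂P) / (1 - π) := by
  obtain ⟨b0, bA, bW⟩ := βstar
  set S : Ω → ℝ := fun ω => ∑ i, bW i * W ω i
  set R : Ω → ℝ := fun ω => Y ω - (b0 + bA * A ω + S ω)
  have hAL2 : MemLp A 2 P := memLp_of_forall_eq_zero_or_eq_one hA hA01 2
  have hSL2 : MemLp S 2 P := memLp_finsetSum _ fun i _ => (hWL2 i).const_mul (bW i)
  have hRL2 : MemLp R 2 P := hYL2.sub (((memLp_const b0).add (hAL2.const_mul bA)).add hSL2)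
  have hEA : P[A] = π := by
    rw [integral_eq_measureReal_of_forall_eq_zero_or_eq_one hA hA01, hπ, measureReal_def]
  have hcovR : cov[A, R; P] = 0 :=
    covariance_eq_zero_of_forall_integral_sq_le hAL2 hRL2 fun s t => by
      convert hmin (b0 + s, bA + t, bW) using 3; ring
  have hcovS : cov[A, S; P] = 0 :=
    IndepFun.covariance_eq_zero
      (hindep.comp (ψ := fun v : Fin k → ℝ => ∑ i, bW i * v i) measurable_id (by fun_prop))
      hAL2 hSL2
  have hcovY : cov[A, Y; P] = bA * (π * (1 - π)) := by
    have hY : Y = fun ω => b0 + (R + (fun ω => bA * A ω) + S) ω := by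
      ext ω; simp only [R, Pi.add_apply]; ring
    have hRAL2 : MemLp (R + fun ω => bA * A ω) 2 P := hRL2.add (hAL2.const_mul bA)
    rw [hY, covariance_const_add_right ((hRAL2.add hSL2).integrable one_le_two),
      covariance_add_right hAL2 hRAL2 hSL2, covariance_add_right hAL2 hRL2 (hAL2.const_mul bA),
      covariance_const_mul_right, covariance_self_eq_of_forall_eq_zero_or_eq_one hA hA01, hEA,
      hcovR, hcovS]
    ring
  have harms := covariance_eq_one_sub_mul_integral_mul_sub_mul_integral_mul_one_sub hAL2 hYL2
  rw [hcovY, hEA] at harms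
  rw [div_sub_div _ _ hπ0.ne' (sub_ne_zero.mpr hπ1.ne'), eq_div_iff (by nlinarith)]
  linear_combination harms

/-- Under randomization (`A` independent of the adjustment
covariates `W`, with `π = P(A=1) ∈ (0,1)`), the population ANCOVA coefficient
of the treatment indicator equals the difference of treatment-arm outcome means
regardless of misspecification of the linear adjustment:
`β*_A = E[Y·A]/π − E[Y·(1−A)]/(1−π)`. -/
theorem ancova_treatment_coefficient
    {Ω : Type*} [MeasurableSpace Ω] (P : Measure Ω) [IsProbabilityMeasure P]
    {k : ℕ}
    (A : Ω → ℝ) (hA : Measurable A) (hA01 : ∀ ω, A ω = 0 ∨ A ω = 1)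
    (π : ℝ) (hπ : π = (P {ω | A ω = 1}).toReal) (hπ0 : 0 < π) (hπ1 : π < 1)
    (W : Ω → Fin k → ℝ) (hW : Measurable W)
    (hWL2 : ∀ i, MemLp (fun ω => W ω i) 2 P)
    (Y : Ω → ℝ) (hYL2 : MemLp Y 2 P)
    -- randomized treatment assignment
    (hindep : IndepFun A W P)
    -- positive definite Gram matrix of `Z = (1, A, Wᵀ)ᵀ`
    (Z : Ω → Fin (k + 2) → ℝ)
    (hZ : ∀ ω, Z ω = Fin.cons 1 (Fin.cons (A ω) (W ω)))
    (hGram : (Matrix.of fun i j : Fin (k + 2) => ∫ ω, Z ω i * Z ω j ∂P).PosDef)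
    -- `β* = (β*_0, β*_A, β*_W)` is the unique least-squares minimizer
    (βstar : ℝ × ℝ × (Fin k → ℝ))
    (hmin : ∀ β : ℝ × ℝ × (Fin k → ℝ),
      ∫ ω, (Y ω - (βstar.1 + βstar.2.1 * A ω + ∑ i, βstar.2.2 i * W ω i)) ^ 2 ∂P
        ≤ ∫ ω, (Y ω - (β.1 + β.2.1 * A ω + ∑ i, β.2.2 i * W ω i)) ^ 2 ∂P)
    (huniq : ∀ β : ℝ × ℝ × (Fin k → ℝ),
      ∫ ω, (Y ω - (β.1 + β.2.1 * A ω + ∑ i, β.2.2 i * W ω i)) ^ 2 ∂P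
        = ∫ ω, (Y ω - (βstar.1 + βstar.2.1 * A ω + ∑ i, βstar.2.2 i * W ω i)) ^ 2 ∂P
        → β = βstar) :
    βstar.2.1 = (∫ ω, Y ω * A ω ∂P) / π - (∫ ω, Y ω * (1 - A ω) ∂P) / (1 - π) :=
  ancova_treatment_coefficient_general P A hA hA01 π hπ hπ0 hπ1 W hWL2 Y hYL2 hindep βstar hmin
end

section
/- Let M_RE be a k×k positive definite real matrix, ρ ∈ (0,1], and M a (k+l)×(k+l) positive definite real symmetric matrix with M ⪰ ρ·pad(M_RE). Then for every index j < k (identified with the corresponding index of the larger matrix), (M⁻¹)_{jj} ≤ ρ⁻¹·(M_RE⁻¹)_{jj}. This is the inequality underlying Theorem 4(3): the combined-data asymptotic variance of each working-model coefficient is at most the RE-only asymptotic variance. -/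
/-!
`(A⁻¹)ⱼⱼ` is the maximum of the concave function `u ↦ 2 uⱼ - uᵀ A u`. Testing the Loewner
inequality `M ⪰ pad(N)` (with `N = ρ M_RE`) at the maximiser `v = M⁻¹ e_j` of the problem for `M`,
whose value is `vⱼ = vᵀ M v = (M⁻¹)ⱼⱼ`, gives `uᵀ N u ≤ (M⁻¹)ⱼⱼ` for the restriction `u` of `v`;
hence `(M⁻¹)ⱼⱼ ≤ 2 uⱼ - uᵀ N u ≤ (N⁻¹)ⱼⱼ = ρ⁻¹ (M_RE⁻¹)ⱼⱼ`.
-/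

namespace Matrix

variable {m n : Type*} [Fintype m] [Fintype n]

lemma dotProduct_mulVec_fromBlocks_zero {R : Type*} [CommSemiring R]
    (A : Matrix m m R) (v : m ⊕ n → R) :
    v ⬝ᵥ (fromBlocks A 0 0 0 *ᵥ v) = (v ∘ Sum.inl) ⬝ᵥ (A *ᵥ (v ∘ Sum.inl)) := by
  simp [fromBlocks_mulVec, dotProduct, Fintype.sum_sum_type]

variable [DecidableEq n]

lemma dotProduct_mulVec_inv_mulVec_single {K : Type*} [CommRing K] {A : Matrix n n K}
    (hA : IsUnit A.det) (j : n) :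
    A⁻¹ *ᵥ Pi.single j 1 ⬝ᵥ (A *ᵥ (A⁻¹ *ᵥ Pi.single j 1)) = A⁻¹ j j := by
  rw [mulVec_mulVec, mul_nonsing_inv _ hA, one_mulVec, dotProduct_single, mul_one]
  simp

lemma PosDef.two_mul_sub_dotProduct_mulVec_le_inv_apply {A : Matrix n n ℝ} (hA : A.PosDef)
    (j : n) (u : n → ℝ) : 2 * u j - u ⬝ᵥ (A *ᵥ u) ≤ A⁻¹ j j := by
  have hdet : IsUnit A.det := (isUnit_iff_isUnit_det A).mp hA.isUnit
  have hvAv := dotProduct_mulVec_inv_mulVec_single hdet j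
  set v := A⁻¹ *ᵥ Pi.single j 1
  have hAv : A *ᵥ v = Pi.single j 1 := by rw [mulVec_mulVec, mul_nonsing_inv _ hdet, one_mulVec]
  have hAt : Aᵀ = A := (conjTranspose_eq_transpose_of_trivial A).symm.trans hA.isHermitian
  have huAv : u ⬝ᵥ (A *ᵥ v) = u j := by rw [hAv, dotProduct_single, mul_one]
  have hvAu : v ⬝ᵥ (A *ᵥ u) = u j := by
    rw [dotProduct_mulVec, ← mulVec_transpose, hAt, hAv, single_dotProduct, one_mul]
  have hnonneg := hA.posSemidef.dotProduct_mulVec_nonneg (u - v)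
  rw [star_trivial, mulVec_sub, sub_dotProduct, dotProduct_sub, dotProduct_sub, huAv, hvAu,
    hvAv] at hnonneg
  linarith

lemma PosDef.inv_apply_inl_le_of_posSemidef_sub_fromBlocks [DecidableEq m]
    {M : Matrix (m ⊕ n) (m ⊕ n) ℝ} {N : Matrix m m ℝ} (hM : M.PosDef) (hN : N.PosDef)
    (hle : (M - fromBlocks N 0 0 0).PosSemidef) (j : m) :
    M⁻¹ (Sum.inl j) (Sum.inl j) ≤ N⁻¹ j j := by
  set v := M⁻¹ *ᵥ Pi.single (Sum.inl j) 1
  have hvj : v (Sum.inl j) = M⁻¹ (Sum.inl j) (Sum.inl j) := by simp [v]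
  have hquad : (v ∘ Sum.inl) ⬝ᵥ (N *ᵥ (v ∘ Sum.inl)) ≤ M⁻¹ (Sum.inl j) (Sum.inl j) := by
    have hgap := hle.dotProduct_mulVec_nonneg v
    rw [star_trivial, sub_mulVec, dotProduct_sub, dotProduct_mulVec_fromBlocks_zero,
      dotProduct_mulVec_inv_mulVec_single ((isUnit_iff_isUnit_det M).mp hM.isUnit)] at hgap
    linarith
  have hmax := hN.two_mul_sub_dotProduct_mulVec_le_inv_apply j (v ∘ Sum.inl)
  rw [Function.comp_apply, hvj] at hmax
  linarith

end Matrix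

open Matrix

theorem combined_data_variance_reduction_general {k l : ℕ}
    (MRE : Matrix (Fin k) (Fin k) ℝ) (hMRE : MRE.PosDef)
    (ρ : ℝ) (hρ0 : 0 < ρ)
    (M : Matrix (Fin k ⊕ Fin l) (Fin k ⊕ Fin l) ℝ)
    (hM : M.PosDef)
    (hdom : (M - ρ • Matrix.fromBlocks MRE 0 0 0).PosSemidef) :
    ∀ j : Fin k, M⁻¹ (Sum.inl j) (Sum.inl j) ≤ ρ⁻¹ * MRE⁻¹ j j := by
  intro j
  simp only [fromBlocks_smul, smul_zero] at hdom
  have hinv : (ρ • MRE)⁻¹ = ρ⁻¹ • MRE⁻¹ :=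
    inv_smul' MRE (Units.mk0 ρ hρ0.ne') ((isUnit_iff_isUnit_det MRE).mp hMRE.isUnit)
  simpa [hinv] using hM.inv_apply_inl_le_of_posSemidef_sub_fromBlocks (hMRE.smul hρ0) hdom j

/-- if `M_RE` is `k×k` positive definite, `ρ ∈ (0,1]`, and `M` is a
`(k+l)×(k+l)` positive definite symmetric matrix with `M ⪰ ρ·pad(M_RE)` (Loewner
order, `pad` placing `M_RE` as the upper-left block and zeros elsewhere), then
every diagonal entry of `M⁻¹` corresponding to an index `j < k` satisfies
`(M⁻¹)_{jj} ≤ ρ⁻¹ (M_RE⁻¹)_{jj}`. -/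
theorem combined_data_variance_reduction {k l : ℕ}
    (MRE : Matrix (Fin k) (Fin k) ℝ) (hMRE : MRE.PosDef)
    (ρ : ℝ) (hρ0 : 0 < ρ) (hρ1 : ρ ≤ 1)
    (M : Matrix (Fin k ⊕ Fin l) (Fin k ⊕ Fin l) ℝ)
    (hMsymm : M.IsSymm) (hM : M.PosDef)
    (hdom : (M - ρ • Matrix.fromBlocks MRE 0 0 0).PosSemidef) :
    ∀ j : Fin k, M⁻¹ (Sum.inl j) (Sum.inl j) ≤ ρ⁻¹ * MRE⁻¹ j j :=
  combined_data_variance_reduction_general MRE hMRE ρ hρ0 M hM hdom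
end

section
/- Strict efficiency gain: let M_RE be a k×k positive definite real matrix, ρ ∈ (0,1], M a (k+l)×(k+l) positive definite real symmetric matrix with Q := M − ρ·pad(M_RE) positive semidefinite, and j < k with standard basis vector e_j. Setting x := M⁻¹ e_j, one has (M⁻¹)_{jj} + xᵀ Q x ≤ ρ⁻¹·(M_RE⁻¹)_{jj}; in particular, if Q·(M⁻¹ e_j) ≠ 0, then (M⁻¹)_{jj} < ρ⁻¹·(M_RE⁻¹)_{jj}, corresponding to the strict variance inequality V(τ̂_RE) > V(τ̂) of Theorem 4(3). -/
/-!
Write `y` for the trial block of `x = M⁻¹ e_j` and `A = M_RE`. Since `M x = e_j`, the quadratic form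
splits as `xᵀ Q x = xᵀ M x - ρ yᵀ A y = (M⁻¹)_{jj} - ρ yᵀ A y`, while `y_j = (M⁻¹)_{jj}`. Hence
`(M⁻¹)_{jj} + xᵀ Q x = 2 y_j - ρ yᵀ A y`, and completing the square around `ρ⁻¹ A⁻¹ e_j` bounds this
by `ρ⁻¹ (A⁻¹)_{jj}`. If `Q x ≠ 0`, positive semidefiniteness makes `xᵀ Q x > 0`, so the bound on
`(M⁻¹)_{jj}` is strict.
-/

open Matrix

theorem Matrix.dotProduct_fromBlocks_zero_mulVec {m n α : Type*} [Fintype m] [Fintype n]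
    [NonUnitalNonAssocSemiring α] (A : Matrix m m α) (x : m ⊕ n → α) :
    x ⬝ᵥ (fromBlocks A 0 0 0 *ᵥ x) = (x ∘ Sum.inl) ⬝ᵥ (A *ᵥ (x ∘ Sum.inl)) := by
  rw [← Sum.elim_comp_inl_inr x, fromBlocks_mulVec, sumElim_dotProduct_sumElim]
  simp

theorem Matrix.inv_mulVec_single_dotProduct_mulVec {n α : Type*} [Fintype n] [DecidableEq n]
    [CommRing α] {M : Matrix n n α} (hM : IsUnit M.det) (i : n) :
    (M⁻¹ *ᵥ Pi.single i 1) ⬝ᵥ (M *ᵥ (M⁻¹ *ᵥ Pi.single i 1)) = M⁻¹ i i := by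
  rw [mulVec_mulVec, mul_nonsing_inv M hM, one_mulVec, dotProduct_single, mul_one, mulVec_single]
  simp

open scoped ComplexOrder in
theorem Matrix.PosSemidef.dotProduct_mulVec_pos_of_mulVec_ne_zero {n 𝕜 : Type*} [Fintype n]
    [RCLike 𝕜] {A : Matrix n n 𝕜} (hA : A.PosSemidef) {x : n → 𝕜} (hAx : A *ᵥ x ≠ 0) :
    0 < star x ⬝ᵥ (A *ᵥ x) :=
  (hA.dotProduct_mulVec_nonneg x).lt_of_ne fun h ↦ hAx <| (hA.dotProduct_mulVec_zero_iff x).mp h.symm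

theorem Matrix.PosDef.two_mul_dotProduct_sub_le {n : Type*} [Fintype n] [DecidableEq n]
    {A : Matrix n n ℝ} (hA : A.PosDef) {ρ : ℝ} (hρ : 0 < ρ) (y b : n → ℝ) :
    2 * (y ⬝ᵥ b) - ρ * (y ⬝ᵥ (A *ᵥ y)) ≤ ρ⁻¹ * (b ⬝ᵥ (A⁻¹ *ᵥ b)) := by
  have hAt : Aᵀ = A := by simpa using hA.isHermitian.eq
  set z := ρ • y - A⁻¹ *ᵥ b
  have hAz : A *ᵥ z = ρ • (A *ᵥ y) - b := by
    rw [mulVec_sub, mulVec_smul, mulVec_mulVec,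
      mul_nonsing_inv A (A.isUnit_iff_isUnit_det.mp hA.isUnit), one_mulVec]
  have hsymm : z ⬝ᵥ (A *ᵥ y) = (A *ᵥ z) ⬝ᵥ y := by
    rw [dotProduct_mulVec, ← mulVec_transpose, hAt]
  have hz : z ⬝ᵥ (A *ᵥ z) = ρ ^ 2 * (y ⬝ᵥ (A *ᵥ y)) - 2 * ρ * (y ⬝ᵥ b) + b ⬝ᵥ (A⁻¹ *ᵥ b) := by
    rw [hAz, dotProduct_sub, dotProduct_smul, hsymm, hAz]
    simp only [z, sub_dotProduct, smul_dotProduct, smul_eq_mul, dotProduct_comm b,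
      dotProduct_comm (A *ᵥ y)]
    ring
  have hz0 : 0 ≤ z ⬝ᵥ (A *ᵥ z) := by simpa using hA.posSemidef.dotProduct_mulVec_nonneg z
  calc 2 * (y ⬝ᵥ b) - ρ * (y ⬝ᵥ (A *ᵥ y))
      ≤ 2 * (y ⬝ᵥ b) - ρ * (y ⬝ᵥ (A *ᵥ y)) + ρ⁻¹ * (z ⬝ᵥ (A *ᵥ z)) :=
        le_add_of_nonneg_right (mul_nonneg (inv_nonneg.2 hρ.le) hz0)
    _ = ρ⁻¹ * (b ⬝ᵥ (A⁻¹ *ᵥ b)) := by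
        rw [hz]; field_simp; ring

theorem strict_efficiency_gain_general {k l : ℕ}
    (MRE : Matrix (Fin k) (Fin k) ℝ) (hMRE : MRE.PosDef)
    (ρ : ℝ) (hρ0 : 0 < ρ)
    (M : Matrix (Fin k ⊕ Fin l) (Fin k ⊕ Fin l) ℝ) (hM : M.PosDef)
    (Q : Matrix (Fin k ⊕ Fin l) (Fin k ⊕ Fin l) ℝ)
    (hQ : Q = M - ρ • Matrix.fromBlocks MRE 0 0 0)
    (hQpsd : Q.PosSemidef)
    (j : Fin k) (x : Fin k ⊕ Fin l → ℝ)
    (hx : x = M⁻¹ *ᵥ Pi.single (Sum.inl j) 1) :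
    M⁻¹ (Sum.inl j) (Sum.inl j) + x ⬝ᵥ (Q *ᵥ x) ≤ ρ⁻¹ * MRE⁻¹ j j ∧
    (Q *ᵥ x ≠ 0 → M⁻¹ (Sum.inl j) (Sum.inl j) < ρ⁻¹ * MRE⁻¹ j j) := by
  set y := x ∘ Sum.inl
  have hyj : y j = M⁻¹ (Sum.inl j) (Sum.inl j) := by simp [y, hx]
  have hxMx : x ⬝ᵥ (M *ᵥ x) = M⁻¹ (Sum.inl j) (Sum.inl j) :=
    hx ▸ inv_mulVec_single_dotProduct_mulVec (M.isUnit_iff_isUnit_det.mp hM.isUnit) _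
  have hxQx : x ⬝ᵥ (Q *ᵥ x) = M⁻¹ (Sum.inl j) (Sum.inl j) - ρ * (y ⬝ᵥ (MRE *ᵥ y)) := by
    rw [hQ, sub_mulVec, dotProduct_sub, smul_mulVec, dotProduct_smul,
      dotProduct_fromBlocks_zero_mulVec, smul_eq_mul, hxMx]
  have hgain := hMRE.two_mul_dotProduct_sub_le hρ0 y (Pi.single j 1)
  simp only [dotProduct_single, single_dotProduct, mul_one, mulVec_single, MulOpposite.op_one,
    one_smul, col_apply] at hgain
  have hle : M⁻¹ (Sum.inl j) (Sum.inl j) + x ⬝ᵥ (Q *ᵥ x) ≤ ρ⁻¹ * MRE⁻¹ j j := by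
    rw [hxQx]; linarith
  refine ⟨hle, fun hQx ↦ ?_⟩
  have hpos := hQpsd.dotProduct_mulVec_pos_of_mulVec_ne_zero hQx
  rw [star_trivial] at hpos
  linarith

/-- Strict efficiency gain. With `M_RE` positive definite `k×k`,
`ρ ∈ (0,1]`, `M` positive definite `(k+l)×(k+l)` and `Q := M − ρ·pad(M_RE)`
positive semidefinite, for `j < k` and `x := M⁻¹ e_j` one has
`(M⁻¹)_{jj} + xᵀQx ≤ ρ⁻¹ (M_RE⁻¹)_{jj}`; in particular, if `Q·(M⁻¹ e_j) ≠ 0`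
then `(M⁻¹)_{jj} < ρ⁻¹ (M_RE⁻¹)_{jj}`. -/
theorem strict_efficiency_gain {k l : ℕ}
    (MRE : Matrix (Fin k) (Fin k) ℝ) (hMRE : MRE.PosDef)
    (ρ : ℝ) (hρ0 : 0 < ρ) (hρ1 : ρ ≤ 1)
    (M : Matrix (Fin k ⊕ Fin l) (Fin k ⊕ Fin l) ℝ) (hM : M.PosDef)
    (Q : Matrix (Fin k ⊕ Fin l) (Fin k ⊕ Fin l) ℝ)
    (hQ : Q = M - ρ • Matrix.fromBlocks MRE 0 0 0)
    (hQpsd : Q.PosSemidef)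
    (j : Fin k) (x : Fin k ⊕ Fin l → ℝ)
    (hx : x = M⁻¹ *ᵥ Pi.single (Sum.inl j) 1) :
    M⁻¹ (Sum.inl j) (Sum.inl j) + x ⬝ᵥ (Q *ᵥ x) ≤ ρ⁻¹ * MRE⁻¹ j j ∧
    (Q *ᵥ x ≠ 0 → M⁻¹ (Sum.inl j) (Sum.inl j) < ρ⁻¹ * MRE⁻¹ j j) :=
  strict_efficiency_gain_general MRE hMRE ρ hρ0 M hM Q hQ hQpsd j x hx
end
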